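/- Let f(x,y,z,w) = (1+x+y)^3 (1+z+w)^3 / (xyzw) − 36. Then the constant term of f^d equals Σ_{k+l=d} (3l)!(3l)!(k+l)!/(k!(l!)^7) · (−36)^k for every d ≥ 0. -/

import Mathlib

open scoped Nat

/-- Laurent polynomials in 4 variables over `ℂ`. -/
noncomputable abbrev LaurentPoly4 : Type := AddMonoidAlgebra ℂ (Fin 4 →₀ ℤ)

/-- The monomial `x^{v 0} y^{v 1} z^{v 2} w^{v 3}`. -/
noncomputable def mono4 (v : Fin 4 →₀ ℤ) : LaurentPoly4 := AddMonoidAlgebra.single v 1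

/-- `f = (1+x+y)^3 (1+z+w)^3 / (x y z w) − 36`, the mirror of the `(3,3)` complete
intersection in `ℙ⁶`. -/
noncomputable def mirror33 : LaurentPoly4 :=
  (1 + mono4 (Finsupp.single 0 1) + mono4 (Finsupp.single 1 1)) ^ 3
      * (1 + mono4 (Finsupp.single 2 1) + mono4 (Finsupp.single 3 1)) ^ 3
      * mono4 (-(Finsupp.single 0 1 + Finsupp.single 1 1 + Finsupp.single 2 1 + Finsupp.single 3 1))
    - 36

/-!
Write `f = g · (xyzw)⁻¹ - 36` with `g = (1+x+y)³(1+z+w)³`. By the binomial theorem the constant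
term of `f^d` is `∑ₗ C(d,l) (-36)^(d-l)` times the coefficient of `(xyzw)^l` in
`g^l = (1+x+y)^(3l) (1+z+w)^(3l)`. The two factors involve disjoint sets of variables, so that
coefficient is the product of the coefficients of `x^l y^l` and of `z^l w^l`, each of which is the
trinomial coefficient `(3l)! / (l!)³`.
-/

theorem Finsupp.single_add_single_eq_iff {σ M : Type*} [AddZeroClass M] {i j : σ} (hij : i ≠ j)
    {p q p' q' : M} :
    Finsupp.single i p + Finsupp.single j q = Finsupp.single i p' + Finsupp.single j q' ↔
      p = p' ∧ q = q' := by
  refine ⟨fun h => ⟨?_, ?_⟩, fun ⟨hp, hq⟩ => hp ▸ hq ▸ rfl⟩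
  · simpa [hij, hij.symm] using DFunLike.congr_fun h i
  · simpa [hij, hij.symm] using DFunLike.congr_fun h j

theorem Nat.choose_mul_choose_mul_factorial_pow_three (l : ℕ) :
    (3 * l).choose (l + l) * (l + l).choose l * l ! ^ 3 = (3 * l)! := by
  have h2 := Nat.add_choose_mul_factorial_mul_factorial l l
  have h3 := Nat.add_choose_mul_factorial_mul_factorial (l + l) l
  rw [← Nat.choose_symm_add, show l + l + l = 3 * l by ring] at h3
  rw [← h3, ← h2]
  ring

theorem Nat.cast_choose_mul_sq_choose_mul_choose {K : Type*} [Field K] [CharZero K] {d l : ℕ}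
    (hl : l ≤ d) :
    (d.choose l : K) * (((3 * l).choose (l + l) : K) * ((l + l).choose l : K)) ^ 2 =
      (3 * l)! * (3 * l)! * d ! / ((d - l)! * l ! ^ 7) := by
  have htri : ((3 * l).choose (l + l) : K) * ((l + l).choose l : K) = (3 * l)! / l ! ^ 3 := by
    rw [eq_div_iff (pow_ne_zero _ (Nat.cast_ne_zero.mpr l.factorial_ne_zero)),
      ← Nat.choose_mul_choose_mul_factorial_pow_three]
    push_cast
    ring
  rw [htri, Nat.cast_choose K hl]
  field_simp

namespace AddMonoidAlgebra

variable {R G σ : Type*}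

theorem coeff_mul_add_of_disjoint [Semiring R] [AddCommGroup G] {H K : AddSubgroup G}
    (hHK : Disjoint H K) {f g : R[G]} (hf : ↑f.coeff.support ⊆ (H : Set G))
    (hg : ↑g.coeff.support ⊆ (K : Set G)) {p q : G} (hp : p ∈ H) (hq : q ∈ K) :
    (f * g).coeff (p + q) = f.coeff p * g.coeff q := by
  refine coeff_mul_add_of_uniqueAdd fun a b ha hb hab => ?_
  have hdiff : a - p = q - b := by rw [sub_eq_sub_iff_add_eq_add, hab, add_comm]
  have hmem : a - p ∈ H ⊓ K := ⟨H.sub_mem (hf ha) hp, hdiff ▸ K.sub_mem hq (hg hb)⟩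
  rw [hHK.eq_bot, AddSubgroup.mem_bot, hdiff, sub_eq_zero] at hmem
  exact ⟨sub_eq_zero.mp (hdiff.trans (sub_eq_zero.mpr hmem)), hmem.symm⟩

theorem support_coeff_pow_subset [Semiring R] [AddMonoid G] {H : AddSubmonoid G} {f : R[G]}
    (hf : ↑f.coeff.support ⊆ (H : Set G)) (n : ℕ) : ↑(f ^ n).coeff.support ⊆ (H : Set G) := by
  classical
  induction n with
  | zero =>
    rw [pow_zero]
    exact (Finset.coe_subset.mpr support_coeff_one_subset).trans (by simp [H.zero_mem])
  | succ n ih =>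
    rw [pow_succ]
    refine (Finset.coe_subset.mpr (support_coeff_mul_subset _ _)).trans ?_
    rw [Finset.coe_add]
    rintro _ ⟨a, ha, b, hb, rfl⟩
    exact H.add_mem (ih ha) (hf hb)

theorem coeff_zero_pow_mul_single_neg_add_single_zero [CommSemiring R] [AddCommGroup G]
    (g : R[G]) (u : G) (c : R) (d : ℕ) :
    ((g * single (-u) 1 + single 0 c) ^ d).coeff 0 =
      ∑ l ∈ Finset.range (d + 1), d.choose l * c ^ (d - l) * (g ^ l).coeff (l • u) := by
  rw [add_pow, coeff_sum, Finsupp.finsetSum_apply]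
  refine Finset.sum_congr rfl fun l _ => ?_
  rw [mul_pow, single_pow, single_pow, one_pow, natCast_def, mul_assoc, mul_assoc,
    single_mul_single, single_mul_single, coeff_mul_single_apply, smul_zero, add_zero, zero_add,
    smul_neg, add_zero, neg_neg]
  ring

theorem single_pow_mul_single_pow [CommSemiring R] (i j : σ) (p q : ℕ) :
    (single (Finsupp.single i 1) 1 ^ p * single (Finsupp.single j 1) 1 ^ q : R[σ →₀ ℤ]) =
      single (Finsupp.single i (p : ℤ) + Finsupp.single j (q : ℤ)) 1 := by
  simp [single_pow, single_mul_single, Finsupp.smul_single]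

theorem coeff_single_add_single_pow [CommSemiring R] {i j : σ} (hij : i ≠ j) (k p q : ℕ) :
    ((single (Finsupp.single i 1) 1 + single (Finsupp.single j 1) 1 : R[σ →₀ ℤ]) ^ k).coeff
        (Finsupp.single i (p : ℤ) + Finsupp.single j (q : ℤ)) =
      if p + q = k then (k.choose p : R) else 0 := by
  classical
  rw [(Commute.all _ _).add_pow', coeff_sum, Finsupp.finsetSum_apply]
  simp only [single_pow_mul_single_pow, smul_single, coeff_single, Finsupp.single_apply,
    Finsupp.single_add_single_eq_iff hij, Nat.cast_inj, nsmul_eq_mul, mul_one, ← Prod.mk.injEq,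
    Prod.mk.eta, Finset.sum_ite_eq', Finset.HasAntidiagonal.mem_antidiagonal]

theorem coeff_one_add_single_add_single_pow [CommSemiring R] {i j : σ} (hij : i ≠ j)
    (n p q : ℕ) :
    ((1 + single (Finsupp.single i 1) 1 + single (Finsupp.single j 1) 1 : R[σ →₀ ℤ]) ^ n).coeff
        (Finsupp.single i (p : ℤ) + Finsupp.single j (q : ℤ)) =
      n.choose (p + q) * (p + q).choose p := by
  classical
  rw [add_assoc, add_comm, add_pow, coeff_sum, Finsupp.finsetSum_apply]
  simp only [one_pow, mul_one, natCast_def, coeff_mul_single_apply, neg_zero, add_zero,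
    coeff_single_add_single_pow hij, ite_mul, zero_mul, Finset.sum_ite_eq, Finset.mem_range]
  split_ifs with h
  · ring
  · rw [Nat.choose_eq_zero_of_lt (by omega), Nat.cast_zero, zero_mul]

theorem support_coeff_one_add_single_add_single_subset [Semiring R] {i j : σ} {S : Set σ}
    (hi : i ∈ S) (hj : j ∈ S) :
    ↑(1 + single (Finsupp.single i 1) 1 + single (Finsupp.single j 1) 1 : R[σ →₀ ℤ]).coeff.support
      ⊆ (Finsupp.supported ℤ ℤ S : Set (σ →₀ ℤ)) := by
  classical
  intro v hv
  simp only [coeff_add, one_def, coeff_single, Finset.mem_coe] at hv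
  rcases Finset.mem_union.mp (Finsupp.support_add hv) with hv | hv
  · rcases Finset.mem_union.mp (Finsupp.support_add hv) with hv | hv
    · rw [Finset.mem_singleton.mp (Finsupp.support_single_subset hv)]
      exact zero_mem _
    · rw [Finset.mem_singleton.mp (Finsupp.support_single_subset hv)]
      exact Finsupp.single_mem_supported ℤ _ hi
  · rw [Finset.mem_singleton.mp (Finsupp.support_single_subset hv)]
    exact Finsupp.single_mem_supported ℤ _ hj

theorem coeff_trinomial_pow_mul_trinomial_pow [CommSemiring R] {i j k m : σ} (hij : i ≠ j)
    (hkm : k ≠ m) (hdisj : Disjoint ({i, j} : Set σ) {k, m}) (n n' p q r s : ℕ) :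
    ((1 + single (Finsupp.single i 1) 1 + single (Finsupp.single j 1) 1) ^ n *
        (1 + single (Finsupp.single k 1) 1 + single (Finsupp.single m 1) 1) ^ n' :
          R[σ →₀ ℤ]).coeff
        ((Finsupp.single i (p : ℤ) + Finsupp.single j (q : ℤ)) +
          (Finsupp.single k (r : ℤ) + Finsupp.single m (s : ℤ))) =
      (n.choose (p + q) * (p + q).choose p) * (n'.choose (r + s) * (r + s).choose r) := by
  let H := (Finsupp.supported ℤ ℤ ({i, j} : Set σ)).toAddSubgroup
  let K := (Finsupp.supported ℤ ℤ ({k, m} : Set σ)).toAddSubgroup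
  have hHK : Disjoint H K := AddSubgroup.disjoint_def.mpr fun hx hy =>
    Submodule.disjoint_def.mp
      (Finsupp.disjoint_supported_supported (M := ℤ) (R := ℤ) hdisj) _ hx hy
  rw [coeff_mul_add_of_disjoint hHK
      (support_coeff_pow_subset (H := H.toAddSubmonoid)
        (support_coeff_one_add_single_add_single_subset (by simp) (by simp)) n)
      (support_coeff_pow_subset (H := K.toAddSubmonoid)
        (support_coeff_one_add_single_add_single_subset (by simp) (by simp)) n')
      (add_mem (Finsupp.single_mem_supported ℤ _ (by simp))
        (Finsupp.single_mem_supported ℤ _ (by simp)))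
      (add_mem (Finsupp.single_mem_supported ℤ _ (by simp))
        (Finsupp.single_mem_supported ℤ _ (by simp))),
    coeff_one_add_single_add_single_pow hij, coeff_one_add_single_add_single_pow hkm]

end AddMonoidAlgebra

/-- The constant term of `f^d` equals
`Σ_{k+l=d} (3l)!(3l)!(k+l)!/(k!(l!)^7) (−36)^k`. -/
theorem mirror33_constant_term (d : ℕ) :
    (mirror33 ^ d).coeff 0 =
      ∑ l ∈ Finset.range (d + 1),
        (((3 * l)! : ℂ) * ((3 * l)! : ℂ) * (((d - l) + l)! : ℂ))
            / (((d - l)! : ℂ) * ((l ! : ℂ)) ^ 7) * (-36 : ℂ) ^ (d - l) := by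
  set u : Fin 4 →₀ ℤ :=
    Finsupp.single 0 1 + Finsupp.single 1 1 + Finsupp.single 2 1 + Finsupp.single 3 1
  have hmirror : mirror33 =
      ((1 + mono4 (Finsupp.single 0 1) + mono4 (Finsupp.single 1 1)) ^ 3
        * (1 + mono4 (Finsupp.single 2 1) + mono4 (Finsupp.single 3 1)) ^ 3)
        * AddMonoidAlgebra.single (-u) 1 + AddMonoidAlgebra.single 0 (-36) := by
    rw [mirror33, sub_eq_add_neg, AddMonoidAlgebra.single_neg]
    rfl
  have hsmul (l : ℕ) : l • u = (Finsupp.single 0 (l : ℤ) + Finsupp.single 1 (l : ℤ)) +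
      (Finsupp.single 2 (l : ℤ) + Finsupp.single 3 (l : ℤ)) := by
    simp [u, Finsupp.smul_single, add_assoc]
  rw [hmirror, AddMonoidAlgebra.coeff_zero_pow_mul_single_neg_add_single_zero]
  refine Finset.sum_congr rfl fun l hl => ?_
  have hld : l ≤ d := Finset.mem_range_succ_iff.mp hl
  rw [mul_pow, ← pow_mul, ← pow_mul, hsmul, mono4, mono4, mono4, mono4,
    AddMonoidAlgebra.coeff_trinomial_pow_mul_trinomial_pow (by decide) (by decide) (by simp),
    Nat.sub_add_cancel hld, ← Nat.cast_choose_mul_sq_choose_mul_choose hld]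
  ring
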